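/- (Representation of transfer entropy by copula entropies, Eq. (6) of the paper, following Ma 2021.) Let k ≥ 1 and let q be a probability density on ℝ × ℝᵏ × ℝ with coordinates (y′, y, x), where y′ plays the role of y_{i+1}, y of the history y^i, and x of x_i. Assume each one-dimensional marginal density of q has a continuous strictly increasing CDF, and that each of the marginal densities of the blocks (y′,y,x), (y,x), (y′,y) and y admits a copula-density factorization with copula densities c_{y′yx} on [0,1]^{k+2}, c_{yx} on [0,1]^{k+1}, c_{y′y} on [0,1]^{k+1}, c_y on [0,1]^{k} respectively, each with c log c integrable, and that the transfer-entropy integrand is integrable. Then the transfer entropy T := ∫ q(y′,y,x) log( q(y′,y,x) q_Y(y) / ( q_{YX}(y,x) q_{Y′Y}(y′,y) ) ) satisfies T = −H_c(y′, y, x) + H_c(y, x) + H_c(y′, y) − H_c(y), where H_c(·) := −∫ c log c du denotes the copula entropy of the indicated block of variables. -/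

import Mathlib

/-!
Pushing `q` forward along the coordinatewise CDF map `F_B` of a block `B` of coordinates gives
the copula density `c_B` on the unit cube: this is the Sklar factorization combined with the
probability integral transform in each coordinate. Hence `∫ q · log c_B(F_B(z_B)) = -H_c(B)`.
Where `q > 0`, the four factorizations hold with the same one-dimensional marginals of `q`, so
the marginal products cancel in `q · q_Y / (q_YX · q_Y'Y)`, whose logarithm is therefore
`log c_Y'YX + log c_Y - log c_YX - log c_Y'Y`; integrating against `q` gives the identity.
-/

open MeasureTheory

/-- The unit cube `[0,1]ⁿ` in `ℝⁿ`. -/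
def unitCube (n : ℕ) : Set (Fin n → ℝ) := Set.univ.pi fun _ => Set.Icc (0 : ℝ) 1

/-- Copula entropy `H_c = −∫_{[0,1]ⁿ} c log c` of a copula density `c` on `[0,1]ⁿ`. -/
noncomputable def copulaEntropy {n : ℕ} (c : (Fin n → ℝ) → ℝ) : ℝ :=
  -∫ u in unitCube n, c u * Real.log (c u)

/-- `c` is a copula density of the joint density `p` on `ℝⁿ`: there are marginal densities
`mᵢ` of `p` with continuous strictly increasing CDFs `Fᵢ` such that
`p x = c (F₁ x₁, …, Fₙ xₙ) · ∏ᵢ mᵢ xᵢ` Lebesgue-a.e. (Sklar factorization). -/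
def IsCopulaDensityOf {n : ℕ} (p : (Fin n → ℝ) → ℝ) (c : (Fin n → ℝ) → ℝ) : Prop :=
  Measurable c ∧ (∀ u, 0 ≤ c u) ∧
    ∃ (m : Fin n → ℝ → ℝ) (F : Fin n → ℝ → ℝ),
      (∀ i, Measurable (m i)) ∧ (∀ i t, 0 ≤ m i t) ∧ (∀ i, ∫ t, m i t = 1) ∧
      (∀ i x, F i x = ∫ t in Set.Iic x, m i t) ∧
      (∀ i, Continuous (F i)) ∧ (∀ i, StrictMono (F i)) ∧
      (∀ i, Measure.map (fun x => x i)
          (volume.withDensity fun x => ENNReal.ofReal (p x)) =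
        volume.withDensity fun t => ENNReal.ofReal (m i t)) ∧
      (∀ᵐ x : Fin n → ℝ, p x = c (fun i => F i (x i)) * ∏ i, m i (x i))

open Set ProbabilityTheory
open scoped ENNReal

namespace MeasureTheory

section Pi

variable {n : ℕ} {E : Type*} [MeasurableSpace E] {μ : Fin n → Measure E} [∀ i, SigmaFinite (μ i)]

theorem lintegral_fin_nat_prod_eq_prod {f : Fin n → E → ℝ≥0∞}
    (hf : ∀ i, Measurable (f i)) :
    ∫⁻ x, ∏ i, f i (x i) ∂(Measure.pi μ) = ∏ i, ∫⁻ x, f i x ∂(μ i) := by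
  induction n with
  | zero => simp
  | succ n ih =>
    calc
      _ = ∫⁻ x : E × (Fin n → E),
          f 0 x.1 * ∏ i : Fin n, f (Fin.succ i) (x.2 i)
          ∂((μ 0).prod (Measure.pi (fun i ↦ μ i.succ))) := by
        rw [← ((measurePreserving_piFinSuccAbove μ 0).symm).lintegral_comp_emb
          (MeasurableEquiv.measurableEmbedding _)]
        simp_rw [MeasurableEquiv.piFinSuccAbove_symm_apply, Fin.insertNthEquiv,
          Fin.prod_univ_succ, Fin.insertNth_zero, Equiv.coe_fn_mk, Fin.cons_succ,
          Fin.zero_succAbove, cast_eq, Fin.cons_zero]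
      _ = (∫⁻ x, f 0 x ∂μ 0) * ∏ i : Fin n, ∫⁻ x, f i.succ x ∂(μ i.succ) := by
        rw [← ih fun i => hf i.succ, ← lintegral_prod_mul (hf 0).aemeasurable]
        exact (Finset.measurable_prod _ fun i _ =>
          (hf i.succ).comp (measurable_pi_apply i)).aemeasurable
      _ = ∏ i, ∫⁻ x, f i x ∂(μ i) := by rw [Fin.prod_univ_succ]

theorem Measure.pi_withDensity {f : Fin n → E → ℝ≥0∞} (hf : ∀ i, Measurable (f i))
    [∀ i, SigmaFinite ((μ i).withDensity (f i))] :
    Measure.pi (fun i => (μ i).withDensity (f i)) =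
      (Measure.pi μ).withDensity fun x => ∏ i, f i (x i) := by
  refine Measure.pi_eq fun s hs => ?_
  rw [withDensity_apply _ (.univ_pi hs), Measure.restrict_pi_pi μ,
    lintegral_fin_nat_prod_eq_prod hf]
  exact Finset.prod_congr rfl fun i _ => (withDensity_apply _ (hs i)).symm

end Pi

section Density

variable {α β : Type*} [MeasurableSpace α] [MeasurableSpace β]

theorem map_withDensity_comp {μ : Measure α} {Φ : α → β} (hΦ : Measurable Φ)
    {g : β → ℝ≥0∞} (hg : Measurable g) :
    (μ.withDensity fun a => g (Φ a)).map Φ = (μ.map Φ).withDensity g := by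
  ext s hs
  rw [Measure.map_apply hΦ hs, withDensity_apply _ (hΦ hs), withDensity_apply _ hs,
    setLIntegral_map hs hg hΦ]

theorem integral_withDensity_ofReal {μ : Measure α} {p : α → ℝ} (hp : Measurable p)
    (hp0 : ∀ a, 0 ≤ p a) (f : α → ℝ) :
    ∫ a, f a ∂μ.withDensity (fun a => ENNReal.ofReal (p a)) = ∫ a, p a * f a ∂μ := by
  rw [integral_withDensity_eq_integral_toReal_smul hp.ennreal_ofReal
    (.of_forall fun _ => ENNReal.ofReal_lt_top)]
  simp_rw [ENNReal.toReal_ofReal (hp0 _), smul_eq_mul]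

theorem integrable_withDensity_ofReal_iff {μ : Measure α} {p : α → ℝ} (hp : Measurable p)
    (hp0 : ∀ a, 0 ≤ p a) {f : α → ℝ} :
    Integrable f (μ.withDensity fun a => ENNReal.ofReal (p a)) ↔
      Integrable (fun a => p a * f a) μ := by
  rw [integrable_withDensity_iff hp.ennreal_ofReal (.of_forall fun _ => ENNReal.ofReal_lt_top)]
  simp_rw [ENNReal.toReal_ofReal (hp0 _), mul_comm]

variable {ν : Measure α} {ψ : α → β} {μ : Measure β}

theorem integral_comp_of_map_eq_withDensity (hψ : AEMeasurable ψ ν) {ρ : β → ℝ}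
    (hρ : Measurable ρ) (hρ0 : ∀ b, 0 ≤ ρ b)
    (hmap : ν.map ψ = μ.withDensity fun b => ENNReal.ofReal (ρ b)) {f : β → ℝ}
    (hf : AEStronglyMeasurable f (ν.map ψ)) :
    ∫ a, f (ψ a) ∂ν = ∫ b, ρ b * f b ∂μ := by
  rw [← integral_map hψ hf, hmap, integral_withDensity_ofReal hρ hρ0]

theorem integrable_comp_iff_of_map_eq_withDensity (hψ : AEMeasurable ψ ν) {ρ : β → ℝ}
    (hρ : Measurable ρ) (hρ0 : ∀ b, 0 ≤ ρ b)
    (hmap : ν.map ψ = μ.withDensity fun b => ENNReal.ofReal (ρ b)) {f : β → ℝ}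
    (hf : AEStronglyMeasurable f (ν.map ψ)) :
    Integrable (fun a => f (ψ a)) ν ↔ Integrable (fun b => ρ b * f b) μ := by
  rw [← integrable_withDensity_ofReal_iff hρ hρ0, ← hmap, integrable_map_measure hf hψ]
  rfl

theorem ae_comp_of_map_eq_withDensity (hψ : AEMeasurable ψ ν) {g : β → ℝ≥0∞}
    (hmap : ν.map ψ = μ.withDensity g) {P : β → Prop} (h : ∀ᵐ b ∂μ, P b) :
    ∀ᵐ a ∂ν, P (ψ a) :=
  ae_of_ae_map hψ (hmap ▸ (withDensity_absolutelyContinuous μ g).ae_le h)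

theorem ae_pos_of_withDensity_ofReal {ρ : β → ℝ} (hρ : Measurable ρ) :
    ∀ᵐ b ∂μ.withDensity (fun b => ENNReal.ofReal (ρ b)), 0 < ρ b :=
  (ae_withDensity_iff hρ.ennreal_ofReal).2
    (.of_forall fun _ h => ENNReal.ofReal_pos.1 (pos_iff_ne_zero.2 h))

theorem ae_pos_comp_of_map_eq_withDensity (hψ : AEMeasurable ψ ν) {ρ : β → ℝ}
    (hρ : Measurable ρ) (hmap : ν.map ψ = μ.withDensity fun b => ENNReal.ofReal (ρ b)) :
    ∀ᵐ a ∂ν, 0 < ρ (ψ a) :=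
  ae_of_ae_map hψ (hmap ▸ ae_pos_of_withDensity_ofReal hρ)

theorem ae_eq_of_withDensity_ofReal_eq [SigmaFinite μ] {f g : β → ℝ} (hf : Measurable f)
    (hg : Measurable g) (hf0 : ∀ b, 0 ≤ f b) (hg0 : ∀ b, 0 ≤ g b)
    (h : μ.withDensity (fun b => ENNReal.ofReal (f b)) =
      μ.withDensity fun b => ENNReal.ofReal (g b)) :
    f =ᵐ[μ] g := by
  filter_upwards [(withDensity_eq_iff_of_sigmaFinite hf.ennreal_ofReal.aemeasurable
    hg.ennreal_ofReal.aemeasurable).1 h] with b hb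
  rwa [ENNReal.ofReal_eq_ofReal_iff (hf0 b) (hg0 b)] at hb

theorem isProbabilityMeasure_withDensity_ofReal {m : α → ℝ} (hm0 : ∀ a, 0 ≤ m a)
    (hm1 : ∫ a, m a ∂ν = 1) :
    IsProbabilityMeasure (ν.withDensity fun a => ENNReal.ofReal (m a)) := by
  have hint : Integrable m ν := .of_integral_ne_zero (by simp [hm1])
  refine ⟨?_⟩
  rw [withDensity_apply _ .univ, Measure.restrict_univ,
    ← ofReal_integral_eq_lintegral_ofReal hint (.of_forall hm0), hm1, ENNReal.ofReal_one]

end Density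

end MeasureTheory

namespace ProbabilityTheory

variable {μ : Measure ℝ}

theorem cdf_mem_Ioo (hmono : StrictMono (cdf μ)) (x : ℝ) : cdf μ x ∈ Ioo 0 1 :=
  ⟨(cdf_nonneg μ _).trans_lt (hmono (sub_one_lt x)),
    (hmono (lt_add_one x)).trans_le (cdf_le_one μ _)⟩

theorem Ioo_subset_range_cdf (hcont : Continuous (cdf μ)) : Ioo 0 1 ⊆ range (cdf μ) :=
  fun _ ha => mem_range_of_exists_le_of_exists_ge hcont
    (((tendsto_cdf_atBot μ).eventually (gt_mem_nhds ha.1)).exists.imp fun _ => le_of_lt)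
    (((tendsto_cdf_atTop μ).eventually (lt_mem_nhds ha.2)).exists.imp fun _ => le_of_lt)

theorem measurePreserving_cdf [IsProbabilityMeasure μ] (hcont : Continuous (cdf μ))
    (hmono : StrictMono (cdf μ)) :
    MeasurePreserving (cdf μ) μ (volume.restrict (Icc 0 1)) := by
  refine ⟨hcont.measurable, Measure.ext_of_Iic _ _ fun a => ?_⟩
  rw [Measure.map_apply hcont.measurable measurableSet_Iic,
    Measure.restrict_apply measurableSet_Iic]
  rcases le_or_gt a 0 with ha0 | ha0
  · have hempty : cdf μ ⁻¹' Iic a = ∅ :=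
      eq_empty_of_forall_notMem fun x hx => (ha0.trans_lt (cdf_mem_Ioo hmono x).1).not_ge hx
    rw [hempty, measure_empty]
    exact (measure_mono_null (fun x hx => le_antisymm (hx.1.trans ha0) hx.2.1)
      (measure_singleton 0)).symm
  rcases le_or_gt 1 a with ha1 | ha1
  · have huniv : cdf μ ⁻¹' Iic a = univ :=
      eq_univ_of_forall fun x => (cdf_le_one μ x).trans ha1
    rw [huniv, measure_univ, inter_eq_right.2 fun x hx => hx.2.trans ha1, Real.volume_Icc]
    simp
  obtain ⟨x, rfl⟩ := Ioo_subset_range_cdf hcont ⟨ha0, ha1⟩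
  have hpre : cdf μ ⁻¹' Iic (cdf μ x) = Iic x := by ext; exact hmono.le_iff_le
  have hinter : Iic (cdf μ x) ∩ Icc 0 1 = Icc 0 (cdf μ x) := by
    ext y
    simp only [mem_inter_iff, mem_Iic, mem_Icc]
    grind
  rw [hpre, hinter, Real.volume_Icc, sub_zero, ofReal_cdf]

theorem cdf_withDensity_ofReal {m : ℝ → ℝ} (hm0 : ∀ t, 0 ≤ m t) (hm1 : ∫ t, m t = 1) (x : ℝ) :
    cdf (volume.withDensity fun t => ENNReal.ofReal (m t)) x = ∫ t in Iic x, m t := by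
  have := isProbabilityMeasure_withDensity_ofReal hm0 hm1
  have hint : Integrable m := .of_integral_ne_zero (by simp [hm1])
  rw [cdf_eq_real, measureReal_def, withDensity_apply _ measurableSet_Iic,
    ← ofReal_integral_eq_lintegral_ofReal hint.integrableOn (.of_forall hm0),
    ENNReal.toReal_ofReal (setIntegral_nonneg measurableSet_Iic fun t _ => hm0 t)]

end ProbabilityTheory

theorem map_withDensity_eq_copula {n : ℕ} {p c : (Fin n → ℝ) → ℝ} {m F : Fin n → ℝ → ℝ}
    (hc : Measurable c) (hm : ∀ i, Measurable (m i)) (hm0 : ∀ i t, 0 ≤ m i t)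
    (hm1 : ∀ i, ∫ t, m i t = 1) (hF : ∀ i x, F i x = ∫ t in Iic x, m i t)
    (hFc : ∀ i, Continuous (F i)) (hFm : ∀ i, StrictMono (F i))
    (hfact : ∀ᵐ x : Fin n → ℝ, p x = c (fun i => F i (x i)) * ∏ i, m i (x i)) :
    (volume.withDensity fun x => ENNReal.ofReal (p x)).map (fun x i => F i (x i)) =
      (volume.restrict (unitCube n)).withDensity fun u => ENNReal.ofReal (c u) := by
  set M : Fin n → Measure ℝ := fun i => volume.withDensity fun t => ENNReal.ofReal (m i t)
  have hM : ∀ i, IsProbabilityMeasure (M i) := fun i =>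
    isProbabilityMeasure_withDensity_ofReal (hm0 i) (hm1 i)
  have hcdf : ∀ i, F i = cdf (M i) := fun i =>
    funext fun x => (hF i x).trans (cdf_withDensity_ofReal (hm0 i) (hm1 i) x).symm
  have hΦ : Measurable fun (x : Fin n → ℝ) i => F i (x i) :=
    measurable_pi_lambda _ fun i => (hFc i).measurable.comp (measurable_pi_apply i)
  have hpres : MeasurePreserving (fun x i => F i (x i)) (Measure.pi M)
      (volume.restrict (unitCube n)) := by
    rw [unitCube, volume_pi, Measure.restrict_pi_pi]
    refine measurePreserving_pi _ _ fun i => ?_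
    rw [hcdf i]
    exact measurePreserving_cdf (hcdf i ▸ hFc i) (hcdf i ▸ hFm i)
  have hdens : (volume.withDensity fun x => ENNReal.ofReal (p x)) =
      (Measure.pi M).withDensity fun x => ENNReal.ofReal (c fun i => F i (x i)) := by
    have hP : Measurable fun x : Fin n → ℝ => ∏ i, ENNReal.ofReal (m i (x i)) := by
      fun_prop
    have hC : Measurable fun x : Fin n → ℝ => ENNReal.ofReal (c fun i => F i (x i)) :=
      hc.ennreal_ofReal.comp hΦ
    rw [Measure.pi_withDensity fun i => (hm i).ennreal_ofReal, ← volume_pi,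
      ← withDensity_mul _ hP hC]
    refine withDensity_congr_ae ?_
    filter_upwards [hfact] with x hx
    rw [hx, Pi.mul_apply, ENNReal.ofReal_mul' (Finset.prod_nonneg fun i _ => hm0 i (x i)),
      ENNReal.ofReal_prod_of_nonneg fun i _ => hm0 i (x i), mul_comm]
  rw [hdens, map_withDensity_comp hΦ hc.ennreal_ofReal, hpres.map_eq]

theorem IsCopulaDensityOf.exists_map_eq {n N : ℕ} {p c : (Fin n → ℝ) → ℝ}
    (h : IsCopulaDensityOf p c) {ν : Measure (Fin N → ℝ)} {σ : Fin n → Fin N}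
    (hp : ν.map (fun z i => z (σ i)) = volume.withDensity fun x => ENNReal.ofReal (p x))
    {m : Fin N → ℝ → ℝ} (hm : ∀ j, Measurable (m j)) (hm0 : ∀ j t, 0 ≤ m j t)
    (hmarg : ∀ j, ν.map (fun z => z j) = volume.withDensity fun t => ENNReal.ofReal (m j t)) :
    ∃ Φ : (Fin N → ℝ) → Fin n → ℝ, Measurable Φ ∧
      ν.map Φ = (volume.restrict (unitCube n)).withDensity (fun u => ENNReal.ofReal (c u)) ∧
      ∀ᵐ z ∂ν, p (fun i => z (σ i)) = c (Φ z) * ∏ i, m (σ i) (z (σ i)) := by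
  obtain ⟨hc, -, mB, F, hmB, hmB0, hmB1, hF, hFc, hFm, hmargB, hfact⟩ := h
  have hπ : Measurable fun (z : Fin N → ℝ) i => z (σ i) := by fun_prop
  have hΦ : Measurable fun (x : Fin n → ℝ) i => F i (x i) :=
    measurable_pi_lambda _ fun i => (hFc i).measurable.comp (measurable_pi_apply i)
  have hmB_eq : ∀ i, mB i =ᵐ[volume] m (σ i) := fun i =>
    ae_eq_of_withDensity_ofReal_eq (hmB i) (hm _) (hmB0 i) (hm0 _) <| by
      rw [← hmargB i, ← hmarg (σ i), ← hp, Measure.map_map (measurable_pi_apply i) hπ]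
      rfl
  refine ⟨_, hΦ.comp hπ, ?_, ?_⟩
  · rw [← Measure.map_map hΦ hπ, hp]
    exact map_withDensity_eq_copula hc hmB hmB0 hmB1 hF hFc hFm hfact
  · filter_upwards [ae_comp_of_map_eq_withDensity hπ.aemeasurable hp hfact,
      ae_all_iff.2 fun i => ae_comp_of_map_eq_withDensity
        (measurable_pi_apply (σ i)).aemeasurable (hmarg (σ i)) (hmB_eq i)] with z hz hzm
    rw [hz]
    exact congrArg _ (Finset.prod_congr rfl fun i _ => hzm i)

section CopulaEntropy

variable {n : ℕ} {p c : (Fin n → ℝ) → ℝ} {α : Type*} [MeasurableSpace α] {ν : Measure α}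
  {Φ : α → Fin n → ℝ}

theorem IsCopulaDensityOf.integral_log_comp_eq (h : IsCopulaDensityOf p c) (hΦ : Measurable Φ)
    (hmap : ν.map Φ = (volume.restrict (unitCube n)).withDensity fun u => ENNReal.ofReal (c u)) :
    ∫ a, Real.log (c (Φ a)) ∂ν = -copulaEntropy c := by
  rw [copulaEntropy, neg_neg, integral_comp_of_map_eq_withDensity hΦ.aemeasurable h.1 h.2.1 hmap
    (f := fun u => Real.log (c u)) (Real.measurable_log.comp h.1).aestronglyMeasurable]

theorem IsCopulaDensityOf.integrable_log_comp (h : IsCopulaDensityOf p c) (hΦ : Measurable Φ)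
    (hmap : ν.map Φ = (volume.restrict (unitCube n)).withDensity fun u => ENNReal.ofReal (c u))
    (hint : IntegrableOn (fun u => c u * Real.log (c u)) (unitCube n)) :
    Integrable (fun a => Real.log (c (Φ a))) ν :=
  (integrable_comp_iff_of_map_eq_withDensity hΦ.aemeasurable h.1 h.2.1 hmap
    (f := fun u => Real.log (c u)) (Real.measurable_log.comp h.1).aestronglyMeasurable).2 hint

end CopulaEntropy

theorem log_mul_div_mul_eq_of_eq_mul {p r s t cp cr cs ct a b d : ℝ}
    (hp : p = cp * (a * b)) (hr : r = cr * d) (hs : s = cs * b) (ht : t = ct * (a * d))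
    (hp0 : p ≠ 0) (hr0 : r ≠ 0) (hs0 : s ≠ 0) (ht0 : t ≠ 0) :
    Real.log (p * r / (s * t)) = Real.log cp + Real.log cr - Real.log cs - Real.log ct := by
  subst hp hr hs ht
  simp only [ne_eq, mul_eq_zero, not_or] at hp0 hr0 hs0 ht0
  obtain ⟨hcp, ha, hb⟩ := hp0
  obtain ⟨hcr, hd⟩ := hr0
  have hratio : cp * (a * b) * (cr * d) / (cs * b * (ct * (a * d))) = cp * cr / (cs * ct) := by
    field_simp
  rw [hratio, Real.log_div (mul_ne_zero hcp hcr) (mul_ne_zero hs0.1 ht0.1),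
    Real.log_mul hcp hcr, Real.log_mul hs0.1 ht0.1]
  ring

theorem transferEntropy_eq_copulaEntropies_general
    (k : ℕ)
    (q : (Fin (k + 2) → ℝ) → ℝ) (hq_meas : Measurable q)
    (hq_nonneg : ∀ z, 0 ≤ q z)
    (qY : (Fin k → ℝ) → ℝ) (hqY_meas : Measurable qY)
    (qYX : (Fin (k + 1) → ℝ) → ℝ) (hqYX_meas : Measurable qYX)
    (qY'Y : (Fin (k + 1) → ℝ) → ℝ) (hqY'Y_meas : Measurable qY'Y)
    (hqY : Measure.map (fun z (i : Fin k) => z i.succ.castSucc)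
        (volume.withDensity fun z => ENNReal.ofReal (q z)) =
      volume.withDensity fun y => ENNReal.ofReal (qY y))
    (hqYX : Measure.map (fun z (i : Fin (k + 1)) => z i.succ)
        (volume.withDensity fun z => ENNReal.ofReal (q z)) =
      volume.withDensity fun w => ENNReal.ofReal (qYX w))
    (hqY'Y : Measure.map (fun z (i : Fin (k + 1)) => z i.castSucc)
        (volume.withDensity fun z => ENNReal.ofReal (q z)) =
      volume.withDensity fun w => ENNReal.ofReal (qY'Y w))
    (cFull : (Fin (k + 2) → ℝ) → ℝ) (hcFull : IsCopulaDensityOf q cFull)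
    (cYX : (Fin (k + 1) → ℝ) → ℝ) (hcYX : IsCopulaDensityOf qYX cYX)
    (cY'Y : (Fin (k + 1) → ℝ) → ℝ) (hcY'Y : IsCopulaDensityOf qY'Y cY'Y)
    (cY : (Fin k → ℝ) → ℝ) (hcY : IsCopulaDensityOf qY cY)
    (hcFull_int : IntegrableOn (fun u => cFull u * Real.log (cFull u))
      (unitCube (k + 2)) volume)
    (hcYX_int : IntegrableOn (fun u => cYX u * Real.log (cYX u))
      (unitCube (k + 1)) volume)
    (hcY'Y_int : IntegrableOn (fun u => cY'Y u * Real.log (cY'Y u))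
      (unitCube (k + 1)) volume)
    (hcY_int : IntegrableOn (fun u => cY u * Real.log (cY u))
      (unitCube k) volume) :
    ∫ z : Fin (k + 2) → ℝ,
        q z * Real.log (q z * qY (fun i => z i.succ.castSucc) /
          (qYX (fun i => z i.succ) * qY'Y (fun i => z i.castSucc))) =
      -copulaEntropy cFull + copulaEntropy cYX + copulaEntropy cY'Y -
        copulaEntropy cY := by
  set ν : Measure (Fin (k + 2) → ℝ) := volume.withDensity fun z => ENNReal.ofReal (q z)
  obtain ⟨-, -, m, -, hm, hm0, -, -, -, -, hmarg, -⟩ := id hcFull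
  obtain ⟨Φ, hΦ, hΦν, hfact⟩ := hcFull.exists_map_eq (σ := id) Measure.map_id hm hm0 hmarg
  obtain ⟨ΦY, hΦY, hΦYν, hfactY⟩ := hcY.exists_map_eq hqY hm hm0 hmarg
  obtain ⟨ΦYX, hΦYX, hΦYXν, hfactYX⟩ := hcYX.exists_map_eq hqYX hm hm0 hmarg
  obtain ⟨ΦY'Y, hΦY'Y, hΦY'Yν, hfactY'Y⟩ := hcY'Y.exists_map_eq hqY'Y hm hm0 hmarg
  have hlog : (fun z => Real.log (q z * qY (fun i => z i.succ.castSucc) /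
      (qYX (fun i => z i.succ) * qY'Y (fun i => z i.castSucc)))) =ᵐ[ν]
      fun z => Real.log (cFull (Φ z)) + Real.log (cY (ΦY z)) - Real.log (cYX (ΦYX z)) -
        Real.log (cY'Y (ΦY'Y z)) := by
    filter_upwards [hfact, hfactY, hfactYX, hfactY'Y, ae_pos_of_withDensity_ofReal hq_meas,
      ae_pos_comp_of_map_eq_withDensity (by fun_prop : Measurable _).aemeasurable hqY_meas hqY,
      ae_pos_comp_of_map_eq_withDensity (by fun_prop : Measurable _).aemeasurable hqYX_meas hqYX,
      ae_pos_comp_of_map_eq_withDensity (by fun_prop : Measurable _).aemeasurable hqY'Y_meas hqY'Y]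
      with z hq hqY hqYX hqY'Y hq0 hqY0 hqYX0 hqY'Y0
    rw [Fin.prod_univ_succ] at hq hqY'Y
    exact log_mul_div_mul_eq_of_eq_mul hq hqY hqYX (by simpa using hqY'Y)
      hq0.ne' hqY0.ne' hqYX0.ne' hqY'Y0.ne'
  have hF := hcFull.integrable_log_comp hΦ hΦν hcFull_int
  have hY := hcY.integrable_log_comp hΦY hΦYν hcY_int
  have hYX := hcYX.integrable_log_comp hΦYX hΦYXν hcYX_int
  have hY'Y := hcY'Y.integrable_log_comp hΦY'Y hΦY'Yν hcY'Y_int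
  rw [← integral_withDensity_ofReal hq_meas hq_nonneg, integral_congr_ae hlog,
    integral_sub ((hF.fun_add hY).sub' hYX) hY'Y, integral_sub (hF.fun_add hY) hYX,
    integral_add hF hY,
    hcFull.integral_log_comp_eq hΦ hΦν, hcY.integral_log_comp_eq hΦY hΦYν,
    hcYX.integral_log_comp_eq hΦYX hΦYXν, hcY'Y.integral_log_comp_eq hΦY'Y hΦY'Yν]
  ring

/-- **Transfer entropy in terms of copula entropies (Ma 2021, Eq. (6)).** Let `q` be a
probability density on `ℝ^{k+2}` whose coordinates `(y′, y, x)` are: `y′ = z 0` (playing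
the role of `y_{i+1}`), `y = (z 1, …, z k)` (the history `yⁱ`), and `x = z (k+1)`
(playing the role of `xᵢ`), with block marginal densities `qY, qYX, qY′Y`. If the blocks
`(y′,y,x)`, `(y,x)`, `(y′,y)` and `y` admit copula-density factorizations with copula
densities `cFull, cYX, cY'Y, cY` (each with `c log c` integrable), and the
transfer-entropy integrand is integrable, then the transfer entropy
`T = ∫ q log ( q · qY / (qYX · qY′Y) )` satisfies
`T = −H_c(y′,y,x) + H_c(y,x) + H_c(y′,y) − H_c(y)`. -/
theorem transferEntropy_eq_copulaEntropies
    (k : ℕ) (hk : 1 ≤ k)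
    (q : (Fin (k + 2) → ℝ) → ℝ) (hq_meas : Measurable q)
    (hq_nonneg : ∀ z, 0 ≤ q z) (hq_int : ∫ z, q z = 1)
    (qY : (Fin k → ℝ) → ℝ) (hqY_meas : Measurable qY)
    (qYX : (Fin (k + 1) → ℝ) → ℝ) (hqYX_meas : Measurable qYX)
    (qY'Y : (Fin (k + 1) → ℝ) → ℝ) (hqY'Y_meas : Measurable qY'Y)
    (hqY : Measure.map (fun z (i : Fin k) => z i.succ.castSucc)
        (volume.withDensity fun z => ENNReal.ofReal (q z)) =
      volume.withDensity fun y => ENNReal.ofReal (qY y))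
    (hqYX : Measure.map (fun z (i : Fin (k + 1)) => z i.succ)
        (volume.withDensity fun z => ENNReal.ofReal (q z)) =
      volume.withDensity fun w => ENNReal.ofReal (qYX w))
    (hqY'Y : Measure.map (fun z (i : Fin (k + 1)) => z i.castSucc)
        (volume.withDensity fun z => ENNReal.ofReal (q z)) =
      volume.withDensity fun w => ENNReal.ofReal (qY'Y w))
    (cFull : (Fin (k + 2) → ℝ) → ℝ) (hcFull : IsCopulaDensityOf q cFull)
    (cYX : (Fin (k + 1) → ℝ) → ℝ) (hcYX : IsCopulaDensityOf qYX cYX)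
    (cY'Y : (Fin (k + 1) → ℝ) → ℝ) (hcY'Y : IsCopulaDensityOf qY'Y cY'Y)
    (cY : (Fin k → ℝ) → ℝ) (hcY : IsCopulaDensityOf qY cY)
    (hcFull_int : IntegrableOn (fun u => cFull u * Real.log (cFull u))
      (unitCube (k + 2)) volume)
    (hcYX_int : IntegrableOn (fun u => cYX u * Real.log (cYX u))
      (unitCube (k + 1)) volume)
    (hcY'Y_int : IntegrableOn (fun u => cY'Y u * Real.log (cY'Y u))
      (unitCube (k + 1)) volume)
    (hcY_int : IntegrableOn (fun u => cY u * Real.log (cY u))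
      (unitCube k) volume)
    (hT : Integrable (fun z : Fin (k + 2) → ℝ =>
      q z * Real.log (q z * qY (fun i => z i.succ.castSucc) /
        (qYX (fun i => z i.succ) * qY'Y (fun i => z i.castSucc))))) :
    ∫ z : Fin (k + 2) → ℝ,
        q z * Real.log (q z * qY (fun i => z i.succ.castSucc) /
          (qYX (fun i => z i.succ) * qY'Y (fun i => z i.castSucc))) =
      -copulaEntropy cFull + copulaEntropy cYX + copulaEntropy cY'Y -
        copulaEntropy cY :=
  transferEntropy_eq_copulaEntropies_general k q hq_meas hq_nonneg qY hqY_meas qYX hqYX_meas qY'Y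
    hqY'Y_meas hqY hqYX hqY'Y cFull hcFull cYX hcYX cY'Y hcY'Y cY hcY hcFull_int hcYX_int hcY'Y_int
    hcY_int
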